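/- Let S_𝐭 = (S_{1,t₁},…,S_{d,t_d}) be a toral left invertible commuting d-tuple of weighted translation operators with t₁,…,t_d > 0, let S_𝐭' be its toral Cauchy dual tuple, let E be the joint kernel of S_𝐭^*, and let P be the orthogonal projection of L²(ℝ₊) onto E. If f ∈ L²(ℝ₊) satisfies P (S_𝐭'^* )^k f = P S_{1,t₁}'^{*k₁}⋯S_{d,t_d}'^{*k_d} f = 0 for all k = (k₁,…,k_d) ∈ ℕ^d, then f = 0. -/

import Mathlib

open MeasureTheory Set ContinuousLinearMap

noncomputable section

namespace WTS

/-- Lebesgue measure restricted to `ℝ₊ = [0, ∞)`. -/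
def mu : Measure ℝ := volume.restrict (Set.Ici (0 : ℝ))

/-- The complex Hilbert space `L²(ℝ₊)`. -/
abbrev H : Type := Lp ℂ 2 mu

/-- A symbol: a function `φ` that is continuous and positive on `ℝ₊ = [0, ∞)`. -/
structure IsSymbol (φ : ℝ → ℝ) : Prop where
  cont : ContinuousOn φ (Set.Ici 0)
  pos : ∀ x ∈ Set.Ici (0 : ℝ), 0 < φ x

/-- The weight function `φ_t(x) = √(φ(x)/φ(x−t))` for `x ≥ t`, and `0` for `x < t`. -/
def wt (φ : ℝ → ℝ) (t : ℝ) (x : ℝ) : ℝ :=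
  if t ≤ x then Real.sqrt (φ x / φ (x - t)) else 0

/-- `S` is the weighted translation operator with symbol `φ` and translation `t`:
`(S f)(x) = φ_t(x) f(x−t)` for `x ≥ t` and `0` for `x < t`, where `φ_t` is essentially
bounded. -/
structure IsWT (φ : ℝ → ℝ) (t : ℝ) (S : H →L[ℂ] H) : Prop where
  bdd : ∃ C : ℝ, ∀ᵐ x ∂mu, wt φ t x ≤ C
  eval : ∀ f : H, ∀ᵐ x ∂mu,
    (S f : ℝ → ℂ) x = if t ≤ x then (wt φ t x : ℂ) * (f : ℝ → ℂ) (x - t) else 0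

/-- `φ_t` is essentially bounded below by a positive constant on `[t, ∞)`;
this is precisely left invertibility of the weighted translation operator. -/
def LowerBdd (φ : ℝ → ℝ) (t : ℝ) : Prop :=
  ∃ c : ℝ, 0 < c ∧ ∀ᵐ x ∂mu, t ≤ x → c ≤ wt φ t x

/-- `T` is the Cauchy dual of the weighted translation operator with symbol `φ` and
translation `t`: `(T f)(x) = φ_t(x)⁻¹ f(x−t)` for `x ≥ t` and `0` for `x < t`. -/
def IsWTDual (φ : ℝ → ℝ) (t : ℝ) (T : H →L[ℂ] H) : Prop :=
  ∀ f : H, ∀ᵐ x ∂mu,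
    (T f : ℝ → ℂ) x = if t ≤ x then ((wt φ t x : ℂ))⁻¹ * (f : ℝ → ℂ) (x - t) else 0

/-- The ordered product `S₁^{k₁} ⋯ S_d^{k_d}` of powers of a `d`-tuple of operators. -/
def tuplePow {d : ℕ} (S : Fin d → (H →L[ℂ] H)) (k : Fin d → ℕ) : H →L[ℂ] H :=
  (List.ofFn fun i => S i ^ k i).prod

/-- The joint kernel `E = ⋂ᵢ ker Sᵢ*` of the adjoint tuple. -/
def jointKer {d : ℕ} (S : Fin d → (H →L[ℂ] H)) : Set H :=
  {f : H | ∀ i, ContinuousLinearMap.adjoint (S i) f = 0}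

end WTS

/-!
Let `τ = tᵢ` be the smallest translation length. Every `Sⱼ` maps into functions vanishing on
`[0, tⱼ) ⊇ [0, τ)`, so every function supported in `[0, τ)` lies in the joint kernel `E` of
`S_𝐭*`; hence a vector orthogonal to `E` vanishes on `[0, τ)`. The adjoint of the Cauchy dual
`S'ᵢ` is the weighted backward translation `h ↦ φ_τ(· + τ)⁻¹ h(· + τ)`, whose weight never
vanishes. The hypothesis for `k = m eᵢ` says that `(S'ᵢ*)ᵐ f ⟂ E`, so `f` vanishes on
`[mτ, (m + 1)τ)` for every `m`.
-/

namespace WTS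

lemma ae_mu_nonneg : ∀ᵐ x ∂mu, 0 ≤ x := ae_restrict_mem measurableSet_Ici

lemma measurePreserving_add_const_mu (t : ℝ) :
    MeasurePreserving (· + t) mu (volume.restrict (Ici t)) := by
  have h := (measurePreserving_add_right volume t).restrict_preimage (s := Ici t) measurableSet_Ici
  rwa [show (· + t) ⁻¹' Ici t = Ici (0 : ℝ) by ext x; simp] at h

lemma restrict_Ici_le_mu {t : ℝ} (ht : 0 ≤ t) : volume.restrict (Ici t) ≤ mu :=
  Measure.restrict_mono (Ici_subset_Ici.2 ht) le_rfl

lemma ae_mu_comp_add_const {t : ℝ} (ht : 0 ≤ t) {p : ℝ → Prop} (h : ∀ᵐ x ∂mu, p x) :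
    ∀ᵐ x ∂mu, p (x + t) :=
  (measurePreserving_add_const_mu t).quasiMeasurePreserving.ae
    (h.filter_mono (ae_mono (restrict_Ici_le_mu ht)))

lemma ae_mu_comp_sub_const (t : ℝ) {p : ℝ → Prop} (h : ∀ᵐ x ∂mu, p x) :
    ∀ᵐ x ∂mu, t ≤ x → p (x - t) := by
  have h' : ∀ᵐ y ∂volume.restrict (Ici t), p (y - t) := by
    rw [← (measurePreserving_add_const_mu t).map_eq,
      (measurableEmbedding_addRight t).ae_map_iff]
    simpa using h
  exact ae_restrict_of_ae ((ae_restrict_iff' measurableSet_Ici).1 h')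

lemma memLp_comp_add_const (f : H) {t : ℝ} (ht : 0 ≤ t) :
    MemLp (fun x => (f : ℝ → ℂ) (x + t)) 2 mu :=
  ((Lp.memLp f).mono_measure (restrict_Ici_le_mu ht)).comp_measurePreserving
    (measurePreserving_add_const_mu t)

lemma integral_mu_eq_integral_comp_add_const {E : Type*} [NormedAddCommGroup E]
    [NormedSpace ℝ E] {t : ℝ} (ht : 0 ≤ t) {F : ℝ → E} (hF : ∀ x < t, F x = 0) :
    ∫ x, F x ∂mu = ∫ x, F (x + t) ∂mu := by
  rw [(measurePreserving_add_const_mu t).integral_comp (measurableEmbedding_addRight t)]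
  exact setIntegral_eq_of_subset_of_forall_sdiff_eq_zero measurableSet_Ici
    (Ici_subset_Ici.2 ht) fun x hx => hF x (not_le.1 hx.2)

lemma ae_eq_zero_of_forall_ae_comp_add_nat_mul {E : Type*} [Zero E] {τ : ℝ} (hτ : 0 < τ)
    {f : ℝ → E} (hf : ∀ m : ℕ, ∀ᵐ x ∂mu, x < τ → f (x + m * τ) = 0) : f =ᵐ[mu] 0 := by
  have hf' : ∀ᵐ x ∂mu, ∀ m : ℕ, m * τ ≤ x → x - m * τ < τ → f x = 0 := by
    refine ae_all_iff.2 fun m => ?_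
    filter_upwards [ae_mu_comp_sub_const (m * τ) (hf m)] with x hx hmx
    simpa using hx hmx
  filter_upwards [hf', ae_mu_nonneg] with x hx hx0
  have h1 : (⌊x / τ⌋₊ : ℝ) * τ ≤ x := (le_div_iff₀ hτ).1 (Nat.floor_le (div_nonneg hx0 hτ.le))
  have h2 : x < (⌊x / τ⌋₊ + 1) * τ := (div_lt_iff₀ hτ).1 (Nat.lt_floor_add_one _)
  exact hx _ h1 (by linarith)

lemma wt_add_self {φ : ℝ → ℝ} {t x : ℝ} (hx : 0 ≤ x) :
    wt φ t (x + t) = Real.sqrt (φ (x + t) / φ x) := by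
  rw [wt, if_pos (le_add_of_nonneg_left hx), add_sub_cancel_right]

lemma IsSymbol.wt_add_self_pos {φ : ℝ → ℝ} (hφ : IsSymbol φ) {t x : ℝ} (ht : 0 ≤ t)
    (hx : 0 ≤ x) : 0 < wt φ t (x + t) := by
  rw [wt_add_self hx]
  exact Real.sqrt_pos.2 (div_pos (hφ.pos _ (add_nonneg hx ht)) (hφ.pos _ hx))

lemma IsSymbol.aemeasurable_wt_add_self {φ : ℝ → ℝ} (hφ : IsSymbol φ) {t : ℝ} (ht : 0 ≤ t) :
    AEMeasurable (fun x => wt φ t (x + t)) mu := by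
  have hcont : ContinuousOn (fun x => Real.sqrt (φ (x + t) / φ x)) (Ici 0) :=
    ((hφ.cont.comp (continuousOn_id.add continuousOn_const)
      fun x (hx : 0 ≤ x) => add_nonneg hx ht).div hφ.cont
      fun x hx => (hφ.pos x hx).ne').sqrt
  exact (hcont.aemeasurable measurableSet_Ici).congr
    (ae_mu_nonneg.mono fun x hx => (wt_add_self hx).symm)

lemma memLp_inv_wt_mul_comp_add_const {φ : ℝ → ℝ} {t : ℝ} (hφ : IsSymbol φ) (ht : 0 ≤ t)
    (hlb : LowerBdd φ t) (h : H) :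
    MemLp (fun x => ((wt φ t (x + t) : ℂ))⁻¹ * (h : ℝ → ℂ) (x + t)) 2 mu := by
  obtain ⟨c, hc, hcw⟩ := hlb
  have hmeas : AEStronglyMeasurable
      (fun x => ((wt φ t (x + t) : ℂ))⁻¹ * (h : ℝ → ℂ) (x + t)) mu :=
    ((Complex.measurable_ofReal.comp_aemeasurable (hφ.aemeasurable_wt_add_self ht)).inv.mul
      (memLp_comp_add_const h ht).aestronglyMeasurable.aemeasurable).aestronglyMeasurable
  refine (memLp_comp_add_const h ht).of_le_mul (c := c⁻¹) hmeas ?_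
  filter_upwards [ae_mu_comp_add_const ht hcw, ae_mu_nonneg] with x hcx hx
  have hcx := hcx (le_add_of_nonneg_left hx)
  rw [norm_mul, norm_inv, Complex.norm_real, Real.norm_of_nonneg (hc.le.trans hcx)]
  gcongr

lemma IsWTDual.adjoint_apply_ae {φ : ℝ → ℝ} {t : ℝ} {T : H →L[ℂ] H} (hT : IsWTDual φ t T)
    (hφ : IsSymbol φ) (ht : 0 ≤ t) (hlb : LowerBdd φ t) (h : H) :
    (adjoint T h : ℝ → ℂ) =ᵐ[mu]
      fun x => ((wt φ t (x + t) : ℂ))⁻¹ * (h : ℝ → ℂ) (x + t) := by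
  set hk := memLp_inv_wt_mul_comp_add_const hφ ht hlb h
  suffices adjoint T h = hk.toLp by rw [this]; exact hk.coeFn_toLp
  refine ext_inner_left ℂ fun g => ?_
  let F : ℝ → ℂ := fun x =>
    inner ℂ (if t ≤ x then ((wt φ t x : ℂ))⁻¹ * (g : ℝ → ℂ) (x - t) else 0) ((h : ℝ → ℂ) x)
  rw [adjoint_inner_right, L2.inner_def, L2.inner_def]
  calc ∫ x, inner ℂ ((T g : ℝ → ℂ) x) ((h : ℝ → ℂ) x) ∂mu
      = ∫ x, F x ∂mu := integral_congr_ae <| (hT g).mono fun x hx => by simp only [F, hx]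
    _ = ∫ x, F (x + t) ∂mu :=
        integral_mu_eq_integral_comp_add_const ht fun x hx => by simp [F, not_le.2 hx]
    _ = ∫ x, inner ℂ ((g : ℝ → ℂ) x) ((hk.toLp : ℝ → ℂ) x) ∂mu := by
        refine integral_congr_ae ?_
        filter_upwards [hk.coeFn_toLp, ae_mu_nonneg] with x hkx hx
        simp only [F, hkx, if_pos (le_add_of_nonneg_left hx), add_sub_cancel_right,
          RCLike.inner_apply, map_mul, map_inv₀, Complex.conj_ofReal]
        ring

lemma IsWTDual.adjoint_pow_apply_ae {φ : ℝ → ℝ} {t : ℝ} {T : H →L[ℂ] H} (hT : IsWTDual φ t T)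
    (hφ : IsSymbol φ) (ht : 0 ≤ t) (hlb : LowerBdd φ t) (h : H) (m : ℕ) :
    ∃ c : ℝ → ℂ, ∀ᵐ x ∂mu,
      ((adjoint T ^ m) h : ℝ → ℂ) x = c x * (h : ℝ → ℂ) (x + m * t) ∧ c x ≠ 0 := by
  induction m with
  | zero => exact ⟨1, by simp⟩
  | succ m ih =>
    obtain ⟨c, hc⟩ := ih
    refine ⟨fun x => ((wt φ t (x + t) : ℂ))⁻¹ * c (x + t), ?_⟩
    filter_upwards [hT.adjoint_apply_ae hφ ht hlb ((adjoint T ^ m) h),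
      ae_mu_comp_add_const ht hc, ae_mu_nonneg] with x hAx hcx hx
    refine ⟨?_, mul_ne_zero (by simpa using (hφ.wt_add_self_pos ht hx).ne') hcx.2⟩
    rw [pow_succ', mul_apply_eq_comp, hAx, hcx.1, mul_assoc]
    push_cast
    ring_nf

lemma inner_eq_zero_of_ae_eq_zero_or {𝕜 α E : Type*} [MeasurableSpace α] {μ : Measure α}
    [RCLike 𝕜] [NormedAddCommGroup E] [InnerProductSpace 𝕜 E] {f g : Lp E 2 μ}
    (hfg : ∀ᵐ x ∂μ, (f : α → E) x = 0 ∨ (g : α → E) x = 0) : inner 𝕜 f g = 0 := by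
  rw [L2.inner_def]
  refine integral_eq_zero_of_ae (hfg.mono fun x hx => ?_)
  rcases hx with hx | hx <;> simp [hx]

lemma IsWT.adjoint_eq_zero {φ : ℝ → ℝ} {t : ℝ} {S : H →L[ℂ] H} (hS : IsWT φ t S) {g : H}
    (hg : ∀ᵐ x ∂mu, t ≤ x → (g : ℝ → ℂ) x = 0) : adjoint S g = 0 := by
  refine inner_self_eq_zero (𝕜 := ℂ) |>.1 ?_
  rw [adjoint_inner_left]
  refine inner_eq_zero_of_ae_eq_zero_or ?_
  filter_upwards [hg, hS.eval (adjoint S g)] with x hgx hSx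
  by_cases hxt : t ≤ x
  · exact .inl (hgx hxt)
  · exact .inr (by rw [hSx, if_neg hxt])

lemma ae_eq_zero_on_Iio_of_inner_jointKer {d : ℕ} {φ : Fin d → ℝ → ℝ} {t : Fin d → ℝ}
    {S : Fin d → (H →L[ℂ] H)} (hS : ∀ i, IsWT (φ i) (t i) (S i)) {τ : ℝ} (hτ : ∀ i, τ ≤ t i)
    {h : H} (hh : ∀ g ∈ jointKer S, inner ℂ h g = 0) :
    ∀ᵐ x ∂mu, x < τ → (h : ℝ → ℂ) x = 0 := by
  set hg := (Lp.memLp h).indicator (measurableSet_Iio (a := τ))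
  have hgh : ((hg.toLp : H) : ℝ → ℂ) =ᵐ[mu] (Iio τ).indicator (h : ℝ → ℂ) := hg.coeFn_toLp
  have hker : hg.toLp ∈ jointKer S := fun i => (hS i).adjoint_eq_zero <|
    hgh.mono fun x hx hxt => by
      rw [hx, indicator_of_notMem (show x ∉ Iio τ from not_lt.2 ((hτ i).trans hxt))]
  have hsub : inner ℂ (h - hg.toLp) hg.toLp = 0 := by
    refine inner_eq_zero_of_ae_eq_zero_or ?_
    filter_upwards [Lp.coeFn_sub h hg.toLp, hgh] with x hsx hx
    by_cases hxτ : x ∈ Iio τ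
    · exact .inl (by rw [hsx, Pi.sub_apply, hx, indicator_of_mem hxτ, sub_self])
    · exact .inr (by rw [hx, indicator_of_notMem hxτ])
  have hg0 : hg.toLp = 0 := inner_self_eq_zero.1 <| by
    rwa [inner_sub_left, hh _ hker, zero_sub, neg_eq_zero] at hsub
  filter_upwards [hgh, hg0 ▸ Lp.coeFn_zero ℂ 2 mu] with x hx hx0 hxτ
  simpa [hxτ, hx0] using hx.symm

lemma tuplePow_single {d : ℕ} (T : Fin d → (H →L[ℂ] H)) (i : Fin d) (m : ℕ) :
    tuplePow T (Pi.single i m) = T i ^ m := by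
  classical
  rw [tuplePow, List.ofFn_eq_map, List.prod_map_eq_pow_single i _ fun j hj _ => by
    rw [Pi.single_eq_of_ne hj, pow_zero]]
  simp

lemma tuplePow_zero {d : ℕ} (T : Fin d → (H →L[ℂ] H)) : tuplePow T 0 = 1 := by
  simp [tuplePow]

/-- `P` is the orthogonal projection onto the joint kernel `E` of `S_𝐭*`, encoded by its
characterization `P f ∈ E` and `f − P f ⟂ E`. -/
theorem statement_18_general {d : ℕ} (φ : Fin d → ℝ → ℝ) (t : Fin d → ℝ)
    (S S' : Fin d → (H →L[ℂ] H))
    (hφ : ∀ i, IsSymbol (φ i)) (ht : ∀ i, 0 < t i)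
    (hS : ∀ i, IsWT (φ i) (t i) (S i))
    (hlb : ∀ i, LowerBdd (φ i) (t i))
    (hS' : ∀ i, IsWTDual (φ i) (t i) (S' i))
    (P : H →L[ℂ] H)
    (hP : ∀ f : H, P f ∈ jointKer S ∧
      ∀ g ∈ jointKer S, (inner ℂ (f - P f) g : ℂ) = 0) :
    ∀ f : H,
      (∀ k : Fin d → ℕ,
        P (tuplePow (fun i => ContinuousLinearMap.adjoint (S' i)) k f) = 0) →
      f = 0 := by
  intro f hf
  have horth : ∀ k, ∀ g ∈ jointKer S,
      inner ℂ (tuplePow (fun i => adjoint (S' i)) k f) g = 0 := fun k g hg => by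
    simpa only [hf k, sub_zero] using (hP (tuplePow (fun i => adjoint (S' i)) k f)).2 g hg
  rcases isEmpty_or_nonempty (Fin d) with hd | hd
  · simpa [tuplePow_zero] using horth 0 f isEmptyElim
  obtain ⟨i, hi⟩ := Finite.exists_min t
  refine Lp.eq_zero_iff_ae_eq_zero.2 <|
    ae_eq_zero_of_forall_ae_comp_add_nat_mul (ht i) fun m => ?_
  obtain ⟨c, hc⟩ := (hS' i).adjoint_pow_apply_ae (hφ i) (ht i).le (hlb i) f m
  have hzero := ae_eq_zero_on_Iio_of_inner_jointKer hS hi <| by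
    simpa only [tuplePow_single] using horth (Pi.single i m)
  filter_upwards [hc, hzero] with x hcx hx hxτ
  exact (mul_eq_zero.1 (hcx.1.symm.trans (hx hxτ))).resolve_left hcx.2

/-- let `P` be the orthogonal projection of `L²(ℝ₊)` onto the joint kernel
`E` of `S_𝐭*` (characterized by `P f ∈ E` and `f − P f ⟂ E` for every `f`). If
`P S_{1,t₁}'^{*k₁} ⋯ S_{d,t_d}'^{*k_d} f = 0` for all `k ∈ ℕ^d`, then `f = 0`. -/
theorem statement_18 {d : ℕ} (φ : Fin d → ℝ → ℝ) (t : Fin d → ℝ)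
    (S S' : Fin d → (H →L[ℂ] H))
    (hφ : ∀ i, IsSymbol (φ i)) (ht : ∀ i, 0 < t i)
    (hS : ∀ i, IsWT (φ i) (t i) (S i))
    (hcomm : ∀ i j, S i * S j = S j * S i)
    (hlb : ∀ i, LowerBdd (φ i) (t i))
    (hS' : ∀ i, IsWTDual (φ i) (t i) (S' i))
    (P : H →L[ℂ] H)
    (hP : ∀ f : H, P f ∈ jointKer S ∧
      ∀ g ∈ jointKer S, (inner ℂ (f - P f) g : ℂ) = 0) :
    ∀ f : H,
      (∀ k : Fin d → ℕ,
        P (tuplePow (fun i => ContinuousLinearMap.adjoint (S' i)) k f) = 0) →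
      f = 0 :=
  statement_18_general φ t S S' hφ ht hS hlb hS' P hP

end WTS
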